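/- arXiv:2112.15149 — 3 statements merged into one kernel-verified Lean document; each statement's English description precedes it below -/
import Mathlib

section
/- (i) A point a ∈ V* is regular if and only if a lies on no wall S_{Π,l}. (ii) Two regular points a, b ∈ V* satisfy a ∼ b if and only if a and b lie in the same connected component of the complement in V* of the union of all walls S_{Π,l} (over all nontrivial partitions Π and all l ∈ ℤ). -/
/-!
For `B ∈ 𝓑` the roots of `B` are the edges of a spanning tree on `{1, …, r}`. Removing the edge
`β^{[m]} = α^{ij}` splits the tree into two parts, and the `m`-th `B`-coordinate of `a ∈ V*` is
the sum `a_S = ∑_{k ∈ S} a_k` over the part `S` containing `i`; conversely every nonempty proper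
`S` arises this way, from a path visiting `S` first. Hence, as `a_{Sᶜ} = -a_S`,
`a` is regular iff no `a_S` is an integer, i.e. iff `a` lies on no wall, and `a ∼ b` iff
`⌊a_S⌋ = ⌊b_S⌋` for all `S`. The points of `V*` with prescribed `⌊c_S⌋` form a convex set, while
off the walls each `⌊c_S⌋` is locally constant, so these cells are the components.
-/

open scoped BigOperators

attribute [local instance] Classical.propDecidable

noncomputable section

namespace Verlinde


variable {r : ℕ}

/-- The root `α^{ij} = e_i - e_j`, viewed as the linear functional `x_i - x_j`. -/
def stdRoot (r : ℕ) (i j : Fin r) : Fin r → ℝ :=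
  fun t => (if t = i then 1 else 0) - (if t = j then 1 else 0)

/-- `B ∈ 𝓑`: an ordered tuple of roots forming a linear basis of
`V* = {a : ∑ i, a i = 0}`. -/
def IsOB (r : ℕ) (B : Fin (r - 1) → Fin r → ℝ) : Prop :=
  (∀ m, ∃ i j, i ≠ j ∧ B m = stdRoot r i j) ∧
    LinearIndependent ℝ B ∧
    ∀ a : Fin r → ℝ, (∑ i, a i) = 0 → a ∈ Submodule.span ℝ (Set.range B)

/-- Coordinates of `a` with respect to the tuple `B` (junk unless such
coordinates exist; they are unique when `B` is linearly independent). -/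
def coordsOf (B : Fin (r - 1) → Fin r → ℝ) (a : Fin r → ℝ) : Fin (r - 1) → ℝ :=
  if h : ∃ c : Fin (r - 1) → ℝ, a = ∑ j, c j • B j then h.choose else 0

/-- The integer part `[a]_B ∈ Λ`. -/
def intPart (B : Fin (r - 1) → Fin r → ℝ) (a : Fin r → ℝ) : Fin r → ℝ :=
  ∑ j, (⌊coordsOf B a j⌋ : ℝ) • B j

/-- The fractional part `{a}_B`. -/
def fracPart (B : Fin (r - 1) → Fin r → ℝ) (a : Fin r → ℝ) : Fin r → ℝ :=
  a - intPart B a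

/-- `a ∈ V*` is regular if all its `B`-coordinates are non-integral, for every `B ∈ 𝓑`,
i.e. `{a}_B ∈ ∑_j (0,1)·β^{[j]}` for every `B ∈ 𝓑`. -/
def IsRegular (r : ℕ) (a : Fin r → ℝ) : Prop :=
  ∀ B, IsOB r B → ∀ j, Int.fract (coordsOf B a j) ≠ 0

/-- The flag `Fl(B)`: `Fl(B) j = span (β^{[j]}, …, β^{[r-1]})`. -/
def flagOf (B : Fin (r - 1) → Fin r → ℝ) : Fin (r - 1) → Submodule ℝ (Fin r → ℝ) :=
  fun j => Submodule.span ℝ {x | ∃ i, j ≤ i ∧ B i = x}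

/-- `B ⊣ C`. -/
def Dashv (B C : Fin (r - 1) → Fin r → ℝ) : Prop :=
  ∀ τ : Equiv.Perm (Fin (r - 1)), flagOf (B ∘ τ) ≠ flagOf C

/-- A diagonal basis: a subset of `𝓑` of cardinality `(r-1)!` any two distinct
members of which satisfy `B ⊣ C`. -/
def IsDiagonalBasis (r : ℕ) (D : Finset (Fin (r - 1) → Fin r → ℝ)) : Prop :=
  D.card = (r - 1).factorial ∧ (∀ B ∈ D, IsOB r B) ∧
    ∀ B ∈ D, ∀ C ∈ D, B ≠ C → Dashv B C

/-- The index of the last coordinate (`r` in `1`-indexed notation). -/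
def lastI (r : ℕ) (h : 0 < r) : Fin r := ⟨r - 1, by omega⟩

/-- `ρ = ((r-1)/2, (r-3)/2, …, (1-r)/2)`. -/
def rho (r : ℕ) : Fin r → ℝ := fun i => ((r : ℝ) - 1) / 2 - (i : ℝ)

/-- `σ · a`, where `(σ·a)_i = a_{σ⁻¹ i}`. -/
def permVec (σ : Equiv.Perm (Fin r)) (a : Fin r → ℝ) : Fin r → ℝ := fun i => a (σ⁻¹ i)

/-- A nontrivial (ordered) partition `Π = (Π′, Π″)`, encoded by `Π′ = P`:
both parts nonempty and `r ∈ Π″`. -/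
def NontrivPart (r : ℕ) (h : 0 < r) (P : Finset (Fin r)) : Prop :=
  P.Nonempty ∧ lastI r h ∉ P

/-- The wall `S_{Π,l} ⊆ V*`. -/
def wallSet (r : ℕ) (P : Finset (Fin r)) (l : ℤ) : Set (Fin r → ℝ) :=
  {c | (∑ i, c i) = 0 ∧ (∑ i ∈ P, c i) = (l : ℝ)}

/-- The simplex `Δ` of admissible parabolic weights. -/
def DeltaSet (r : ℕ) (h : 0 < r) : Set (Fin r → ℝ) :=
  {c | (∑ i, c i) = 0 ∧ (∀ i j : Fin r, i < j → c j < c i) ∧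
    c ⟨0, h⟩ - c (lastI r h) < 1}

/-- The chamber of a (regular) point `c ∈ V*`. -/
def chamberOf (r : ℕ) (c : Fin r → ℝ) : Set (Fin r → ℝ) :=
  {b | (∑ i, b i) = 0 ∧ IsRegular r b ∧ ∀ B, IsOB r B → intPart B b = intPart B c}

/-- `{i,j}` is an edge of `Tree(B)`. -/
def IsTreeEdge (B : Fin (r - 1) → Fin r → ℝ) (i j : Fin r) : Prop :=
  ∃ m, B m = stdRoot r i j ∨ B m = stdRoot r j i

/-- `B` splits along the partition `Π` (with `Π′ = P`): exactly one edge of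
`Tree(B)` joins `Π′` and `Π″`. -/
def SplitsAlong (B : Fin (r - 1) → Fin r → ℝ) (P : Finset (Fin r)) : Prop :=
  ∃! pr : Fin r × Fin r, pr.1 ∈ P ∧ pr.2 ∉ P ∧ IsTreeEdge B pr.1 pr.2

/-- The linking root `β_link = α^{pq}` with `p ∈ Π′`, `q ∈ Π″`. -/
def betaLink (B : Fin (r - 1) → Fin r → ℝ) (P : Finset (Fin r)) : Fin r → ℝ :=
  if h : ∃ pr : Fin r × Fin r, pr.1 ∈ P ∧ pr.2 ∉ P ∧ IsTreeEdge B pr.1 pr.2 then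
    stdRoot r h.choose.1 h.choose.2
  else 0


section NonintegralLocus

lemma mem_Ioo_iff_floor_eq_and_fract_ne_zero {R : Type*} [Ring R] [LinearOrder R] [FloorRing R]
    [IsOrderedRing R] {x : R} {n : ℤ} :
    x ∈ Set.Ioo (n : R) (n + 1) ↔ ⌊x⌋ = n ∧ Int.fract x ≠ 0 := by
  constructor
  · rintro ⟨hlo, hhi⟩
    have hfl : ⌊x⌋ = n := Int.floor_eq_iff.mpr ⟨hlo.le, hhi⟩
    refine ⟨hfl, fun h0 => hlo.ne' ?_⟩
    rwa [Int.fract, hfl, sub_eq_zero] at h0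
  · rintro ⟨hfl, h0⟩
    obtain ⟨hlo, hhi⟩ := Int.floor_eq_iff.mp hfl
    exact ⟨hlo.lt_of_ne fun h => h0 (by rw [Int.fract, hfl, ← h, sub_self]), hhi⟩

lemma floor_eq_of_mem_connectedComponentIn {X : Type*} [TopologicalSpace X] {W : Set X}
    {f : X → ℝ} (hf : ContinuousOn f W) (hW : ∀ x ∈ W, Int.fract (f x) ≠ 0) {a b : X}
    (hb : b ∈ connectedComponentIn W a) : ⌊f a⌋ = ⌊f b⌋ := by
  have hKW : connectedComponentIn W a ⊆ W := connectedComponentIn_subset W a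
  have ha : a ∈ connectedComponentIn W a :=
    mem_connectedComponentIn (connectedComponentIn_nonempty_iff.mp ⟨b, hb⟩)
  have key : ∀ {x y}, x ∈ connectedComponentIn W a → y ∈ connectedComponentIn W a →
      ¬⌊f x⌋ < ⌊f y⌋ := by
    intro x y hx hy hlt
    have hfx : f x ≤ ⌊f y⌋ := by
      have : (⌊f x⌋ : ℝ) + 1 ≤ ⌊f y⌋ := by exact_mod_cast hlt
      linarith [Int.lt_floor_add_one (f x)]
    obtain ⟨z, hz, hfz⟩ := isPreconnected_connectedComponentIn.intermediate_value hx hy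
      (hf.mono hKW) ⟨hfx, Int.floor_le _⟩
    exact hW z (hKW hz) (hfz ▸ Int.fract_intCast _)
  exact le_antisymm (not_lt.mp (key hb ha)) (not_lt.mp (key ha hb))

variable {E K : Type*} [AddCommGroup E] [Module ℝ E] [TopologicalSpace E]
  [IsTopologicalAddGroup E] [ContinuousSMul ℝ E]

theorem mem_connectedComponentIn_iff_floor_eq {C : Set E} (hC : Convex ℝ C)
    (f : K → E →L[ℝ] ℝ) {a b : E} (ha : a ∈ {c | c ∈ C ∧ ∀ k, Int.fract (f k c) ≠ 0})
    (hb : b ∈ {c | c ∈ C ∧ ∀ k, Int.fract (f k c) ≠ 0}) :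
    b ∈ connectedComponentIn {c | c ∈ C ∧ ∀ k, Int.fract (f k c) ≠ 0} a ↔
      ∀ k, ⌊f k a⌋ = ⌊f k b⌋ := by
  refine ⟨fun h k => floor_eq_of_mem_connectedComponentIn (f k).continuous.continuousOn
    (fun c hc => hc.2 k) h, fun h => ?_⟩
  let T := C ∩ ⋂ k, f k ⁻¹' Set.Ioo (⌊f k a⌋ : ℝ) (⌊f k a⌋ + 1)
  have hT : Convex ℝ T :=
    hC.inter (convex_iInter fun k => (convex_Ioo _ _).linear_preimage (f k : E →ₗ[ℝ] ℝ))
  have hmemT : ∀ c ∈ C, (∀ k, ⌊f k c⌋ = ⌊f k a⌋ ∧ Int.fract (f k c) ≠ 0) → c ∈ T :=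
    fun c hc hk => ⟨hc, Set.mem_iInter.mpr fun k =>
      mem_Ioo_iff_floor_eq_and_fract_ne_zero.mpr (hk k)⟩
  have hTW : T ⊆ {c | c ∈ C ∧ ∀ k, Int.fract (f k c) ≠ 0} := fun c ⟨hc, hk⟩ =>
    ⟨hc, fun k => (mem_Ioo_iff_floor_eq_and_fract_ne_zero.mp (Set.mem_iInter.mp hk k)).2⟩
  exact hT.isPreconnected.subset_connectedComponentIn
    (hmemT a ha.1 fun k => ⟨rfl, ha.2 k⟩) hTW (hmemT b hb.1 fun k => ⟨(h k).symm, hb.2 k⟩)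

end NonintegralLocus

open Finset

lemma sum_stdRoot_apply (i j : Fin r) (S : Finset (Fin r)) :
    ∑ t ∈ S, stdRoot r i j t = (if i ∈ S then 1 else 0) - (if j ∈ S then 1 else 0) := by
  simp only [stdRoot, sum_sub_distrib, sum_ite_eq']

lemma sum_univ_stdRoot_apply (i j : Fin r) : ∑ t, stdRoot r i j t = 0 := by
  simp [sum_stdRoot_apply]

lemma stdRoot_self (i : Fin r) : stdRoot r i i = 0 := by
  funext t; simp [stdRoot]

lemma stdRoot_swap (i j : Fin r) : stdRoot r j i = -stdRoot r i j := by
  funext t; simp only [stdRoot, Pi.neg_apply]; ring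

lemma stdRoot_add_stdRoot (i j k : Fin r) : stdRoot r i j + stdRoot r j k = stdRoot r i k := by
  funext t; simp only [stdRoot, Pi.add_apply]; ring

section DualSets

variable {α ι : Type*}

/-- The functional `x ↦ ∑ i ∈ S, x i` is the `m`-th coordinate function for `B`. -/
def IsDualSet (B : ι → α → ℝ) (m : ι) (S : Finset α) : Prop :=
  ∀ k, ∑ i ∈ S, B k i = if k = m then 1 else 0

lemma IsDualSet.sum_apply_sum_smul [Fintype ι] {B : ι → α → ℝ} {m : ι} {S : Finset α}
    (hS : IsDualSet B m S) (c : ι → ℝ) : ∑ i ∈ S, (∑ k, c k • B k) i = c m := by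
  simp only [Finset.sum_apply, Pi.smul_apply, smul_eq_mul]
  rw [sum_comm]
  simp_rw [← mul_sum, show ∀ k, ∑ i ∈ S, B k i = _ from hS]
  simp

lemma linearIndependent_of_forall_isDualSet [Fintype ι] {B : ι → α → ℝ}
    (h : ∀ m, ∃ S, IsDualSet B m S) : LinearIndependent ℝ B := by
  refine Fintype.linearIndependent_iff.mpr fun c hc m => ?_
  obtain ⟨S, hS⟩ := h m
  rw [← hS.sum_apply_sum_smul c, hc]
  simp

end DualSets

lemma coordsOf_eq_of_linearIndependent {B : Fin (r - 1) → Fin r → ℝ}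
    (hli : LinearIndependent ℝ B) {a : Fin r → ℝ} {c : Fin (r - 1) → ℝ}
    (h : a = ∑ j, c j • B j) : coordsOf B a = c := by
  have hex : ∃ c : Fin (r - 1) → ℝ, a = ∑ j, c j • B j := ⟨c, h⟩
  rw [coordsOf, dif_pos hex]
  funext j
  exact Fintype.linearIndependent_iffₛ.mp hli _ _ (hex.choose_spec.symm.trans h) j

lemma IsDualSet.coordsOf_eq {B : Fin (r - 1) → Fin r → ℝ} {m : Fin (r - 1)}
    {S : Finset (Fin r)} (hS : IsDualSet B m S) (hB : IsOB r B) {a : Fin r → ℝ}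
    (ha : ∑ i, a i = 0) : coordsOf B a m = ∑ i ∈ S, a i := by
  obtain ⟨c, hc⟩ := (Submodule.mem_span_range_iff_exists_fun ℝ).mp (hB.2.2 a ha)
  rw [coordsOf_eq_of_linearIndependent hB.2.1 hc.symm, ← hc, hS.sum_apply_sum_smul]

lemma IsOB.exists_isDualSet {B : Fin (r - 1) → Fin r → ℝ} (hB : IsOB r B) (m : Fin (r - 1)) :
    ∃ S : Finset (Fin r), S.Nonempty ∧ S ≠ univ ∧ IsDualSet B m S := by
  obtain ⟨i, j, -, hBm⟩ := hB.1 m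
  let Adj : Fin r → Fin r → Prop := fun x y => ∃ k ≠ m, B k = stdRoot r x y ∨ B k = stdRoot r y x
  let S : Finset (Fin r) := univ.filter (Relation.ReflTransGen Adj i)
  have hS : ∀ x, x ∈ S ↔ Relation.ReflTransGen Adj i x := by simp [S]
  have hAdj : ∀ x y, Adj x y → (x ∈ S ↔ y ∈ S) := fun x y ⟨k, hk, h⟩ => by
    rw [hS, hS]
    exact ⟨fun h' => h'.tail ⟨k, hk, h⟩, fun h' => h'.tail ⟨k, hk, h.symm⟩⟩
  have hspan : ∀ y, Relation.ReflTransGen Adj i y →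
      stdRoot r i y ∈ Submodule.span ℝ (B '' {k | k ≠ m}) := by
    intro y hy
    induction hy with
    | refl => simp [stdRoot_self]
    | @tail y z _ hyz ih =>
      obtain ⟨k, hk, hBk⟩ := hyz
      have hk : B k ∈ Submodule.span ℝ (B '' {k | k ≠ m}) := Submodule.subset_span ⟨k, hk, rfl⟩
      rw [← stdRoot_add_stdRoot i y z]
      refine Submodule.add_mem _ ih ?_
      rcases hBk with h | h
      · exact h ▸ hk
      · rw [stdRoot_swap, ← h]; exact Submodule.neg_mem _ hk
  have hjS : j ∉ S := fun hj =>
    hB.2.1.notMem_span_image (s := {k | k ≠ m}) (by simp) (hBm ▸ hspan j ((hS j).mp hj))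
  have hiS : i ∈ S := (hS i).mpr .refl
  refine ⟨S, ⟨i, hiS⟩, fun h => hjS (h ▸ mem_univ j), fun k => ?_⟩
  obtain rfl | hk := eq_or_ne k m
  · simp [hBm, sum_stdRoot_apply, hiS, hjS]
  · obtain ⟨x, y, -, hBk⟩ := hB.1 k
    have hxy := hAdj x y ⟨k, hk, .inl hBk⟩
    by_cases hx : x ∈ S <;> simp [hBk, sum_stdRoot_apply, hk, hx, ← hxy]

def subsetSum (S : Finset (Fin r)) : (Fin r → ℝ) →L[ℝ] ℝ :=
  ∑ i ∈ S, ContinuousLinearMap.proj i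

@[simp]
lemma subsetSum_apply (S : Finset (Fin r)) (c : Fin r → ℝ) : subsetSum S c = ∑ i ∈ S, c i := by
  simp [subsetSum]

lemma finrank_ker_subsetSum_univ (hr : 0 < r) :
    Module.finrank ℝ (LinearMap.ker (subsetSum (univ : Finset (Fin r)) : (Fin r → ℝ) →ₗ[ℝ] ℝ))
      = r - 1 := by
  have hrange : LinearMap.range (subsetSum (univ : Finset (Fin r)) : (Fin r → ℝ) →ₗ[ℝ] ℝ) = ⊤ :=
    LinearMap.range_eq_top.mpr fun y => ⟨Pi.single ⟨0, hr⟩ y, by simp⟩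
  have := LinearMap.finrank_range_add_finrank_ker
    (subsetSum (univ : Finset (Fin r)) : (Fin r → ℝ) →ₗ[ℝ] ℝ)
  rw [hrange, finrank_top, Module.finrank_self, Module.finrank_fin_fun] at this
  omega

lemma mem_span_of_linearIndependent (hr : 0 < r) {B : Fin (r - 1) → Fin r → ℝ}
    (hli : LinearIndependent ℝ B) (hB : ∀ k, ∑ i, B k i = 0) {a : Fin r → ℝ}
    (ha : ∑ i, a i = 0) : a ∈ Submodule.span ℝ (Set.range B) := by
  have hle : Submodule.span ℝ (Set.range B) ≤
      LinearMap.ker (subsetSum (univ : Finset (Fin r)) : (Fin r → ℝ) →ₗ[ℝ] ℝ) := by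
    rw [Submodule.span_le]
    rintro _ ⟨k, rfl⟩
    simpa using hB k
  rw [Submodule.eq_of_le_of_finrank_eq hle (by rw [finrank_span_eq_card hli,
    finrank_ker_subsetSum_univ hr, Fintype.card_fin])]
  simpa using ha

def chainRoots (e : Equiv.Perm (Fin r)) : Fin (r - 1) → Fin r → ℝ :=
  fun t => stdRoot r (e ⟨t, by omega⟩) (e ⟨t + 1, by omega⟩)

lemma isDualSet_chainRoots (e : Equiv.Perm (Fin r)) (t : Fin (r - 1)) :
    IsDualSet (chainRoots e) t (univ.filter fun x => (e.symm x : ℕ) ≤ t) := by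
  intro k
  simp only [chainRoots, sum_stdRoot_apply, mem_filter, mem_univ, true_and,
    Equiv.symm_apply_apply, Fin.ext_iff]
  split_ifs <;> first | omega | norm_num

lemma isOB_chainRoots (hr : 0 < r) (e : Equiv.Perm (Fin r)) : IsOB r (chainRoots e) := by
  have hli := linearIndependent_of_forall_isDualSet fun t => ⟨_, isDualSet_chainRoots e t⟩
  refine ⟨fun t => ⟨_, _, e.injective.ne (by simp [Fin.ext_iff]), rfl⟩, hli,
    fun a ha => mem_span_of_linearIndependent hr hli (fun k => sum_univ_stdRoot_apply _ _) ha⟩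

lemma exists_perm_mem_iff_lt_card (S : Finset (Fin r)) :
    ∃ e : Equiv.Perm (Fin r), ∀ x, e x ∈ S ↔ (x : ℕ) < #S := by
  have hcard : Fintype.card {x : Fin r // (x : ℕ) < #S} = Fintype.card S := by
    rw [Fintype.card_subtype, Fin.card_filter_val_lt, Fintype.card_coe,
      min_eq_right (by simpa using S.card_le_univ)]
  let f := Fintype.equivOfCardEq hcard
  refine ⟨f.extendSubtype, fun x => ⟨fun h => ?_, f.extendSubtype_mem x⟩⟩
  by_contra hx
  exact f.extendSubtype_not_mem x hx h

lemma exists_isOB_coordsOf_eq_sum {S : Finset (Fin r)} (hne : S.Nonempty) (hS : S ≠ univ) :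
    ∃ B m, IsOB r B ∧ ∀ a : Fin r → ℝ, ∑ i, a i = 0 → coordsOf B a m = ∑ i ∈ S, a i := by
  obtain ⟨e, he⟩ := exists_perm_mem_iff_lt_card S
  have hpos := hne.card_pos
  have hlt : #S < r := by simpa using (card_lt_iff_ne_univ S).mpr hS
  let m : Fin (r - 1) := ⟨#S - 1, by omega⟩
  have hm : (univ.filter fun x => (e.symm x : ℕ) ≤ m) = S := by
    ext x
    have := he (e.symm x)
    simp only [Equiv.apply_symm_apply] at this
    simp only [mem_filter, mem_univ, true_and, this, m]
    omega
  have hB := isOB_chainRoots (by omega) e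
  exact ⟨chainRoots e, m, hB, fun a ha => hm ▸ (isDualSet_chainRoots e m).coordsOf_eq hB ha⟩

/-- The coordinates of points of `V*` in the bases `B ∈ 𝓑` are exactly the subset sums `c_S`
over nonempty proper `S`. -/
theorem forall_isOB_coordsOf_iff {a b : Fin r → ℝ} (ha : ∑ i, a i = 0) (hb : ∑ i, b i = 0)
    (p : ℝ → ℝ → Prop) :
    (∀ B, IsOB r B → ∀ j, p (coordsOf B a j) (coordsOf B b j)) ↔
      ∀ S : Finset (Fin r), S.Nonempty → S ≠ univ → p (∑ i ∈ S, a i) (∑ i ∈ S, b i) := by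
  constructor
  · intro h S hne hS
    obtain ⟨B, m, hB, hcoord⟩ := exists_isOB_coordsOf_eq_sum hne hS
    simpa only [hcoord a ha, hcoord b hb] using h B hB m
  · intro h B hB m
    obtain ⟨S, hne, hS, hdual⟩ := hB.exists_isDualSet m
    simpa only [hdual.coordsOf_eq hB ha, hdual.coordsOf_eq hB hb] using h S hne hS

lemma isRegular_iff_forall_fract_sum_ne_zero {a : Fin r → ℝ} (ha : ∑ i, a i = 0) :
    IsRegular r a ↔
      ∀ S : Finset (Fin r), S.Nonempty → S ≠ univ → Int.fract (∑ i ∈ S, a i) ≠ 0 :=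
  forall_isOB_coordsOf_iff ha ha fun x _ => Int.fract x ≠ 0

lemma IsOB.intPart_eq_iff {B : Fin (r - 1) → Fin r → ℝ} (hB : IsOB r B) {a b : Fin r → ℝ} :
    intPart B a = intPart B b ↔ ∀ j, ⌊coordsOf B a j⌋ = ⌊coordsOf B b j⌋ := by
  refine ⟨fun h j => ?_, fun h => sum_congr rfl fun j _ => by rw [h j]⟩
  exact_mod_cast Fintype.linearIndependent_iffₛ.mp hB.2.1 _ _ h j

lemma forall_intPart_eq_iff {a b : Fin r → ℝ} (ha : ∑ i, a i = 0) (hb : ∑ i, b i = 0) :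
    (∀ B, IsOB r B → intPart B a = intPart B b) ↔
      ∀ S : Finset (Fin r), S.Nonempty → S ≠ univ → ⌊∑ i ∈ S, a i⌋ = ⌊∑ i ∈ S, b i⌋ := by
  rw [← forall_isOB_coordsOf_iff ha hb fun x y => ⌊x⌋ = ⌊y⌋]
  exact forall₂_congr fun B hB => hB.intPart_eq_iff

lemma forall_nontrivPart_iff (hr : 0 < r) {p : Finset (Fin r) → Prop} (hp : ∀ S, p Sᶜ ↔ p S) :
    (∀ P, NontrivPart r hr P → p P) ↔ ∀ S : Finset (Fin r), S.Nonempty → S ≠ univ → p S := by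
  refine ⟨fun h S hne hS => ?_, fun h P ⟨hne, hP⟩ => h P hne fun hu => hP (hu ▸ mem_univ _)⟩
  by_cases hlast : lastI r hr ∈ S
  · exact (hp S).mp (h Sᶜ ⟨nonempty_iff_ne_empty.mpr (by simpa using hS), by simpa using hlast⟩)
  · exact h S ⟨hne, hlast⟩

lemma forall_notMem_wallSet_iff_fract_ne_zero {c : Fin r → ℝ} (hc : ∑ i, c i = 0)
    (P : Finset (Fin r)) :
    (∀ l : ℤ, c ∉ wallSet r P l) ↔ Int.fract (∑ i ∈ P, c i) ≠ 0 := by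
  simp [wallSet, hc, Int.fract_eq_zero_iff, eq_comm]

lemma offWalls_iff_forall_fract_sum_ne_zero {c : Fin r → ℝ} (hr : 0 < r) (hc : ∑ i, c i = 0) :
    (∀ (P : Finset (Fin r)) (l : ℤ), NontrivPart r hr P → c ∉ wallSet r P l) ↔
      ∀ S : Finset (Fin r), S.Nonempty → S ≠ univ → Int.fract (∑ i ∈ S, c i) ≠ 0 := by
  rw [← forall_nontrivPart_iff hr (p := fun S => Int.fract (∑ i ∈ S, c i) ≠ 0) fun S => ?_]
  · simp only [← forall_notMem_wallSet_iff_fract_ne_zero hc]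
    exact ⟨fun h P hP l => h P l hP, fun h P l hP => h P hP l⟩
  rw [← neg_eq_of_add_eq_zero_left ((sum_compl_add_sum S c).trans hc)]
  exact not_congr Int.fract_neg_eq_zero

abbrev ProperSubset (r : ℕ) := {S : Finset (Fin r) // S.Nonempty ∧ S ≠ univ}

lemma setOf_offWalls_eq (hr : 0 < r) :
    {c : Fin r → ℝ | (∑ i, c i) = 0 ∧
      ∀ (P : Finset (Fin r)) (l : ℤ), NontrivPart r hr P → c ∉ wallSet r P l} =
    {c | c ∈ {c | ∑ i, c i = 0} ∧ ∀ S : ProperSubset r, Int.fract (subsetSum S.1 c) ≠ 0} := by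
  ext c
  simp only [Set.mem_ofPred_eq, subsetSum_apply, Subtype.forall, and_imp]
  exact and_congr_right fun hc => offWalls_iff_forall_fract_sum_ne_zero hr hc

/-- (i) Regularity is equivalent to lying on no wall.
(ii) Two regular points are equivalent (`[a]_B = [b]_B` for all `B ∈ 𝓑`)
iff they lie in the same connected component of the complement of the walls
in `V*`. -/
theorem regular_iff_offwalls_and_chambers_are_components
    (r : ℕ) (hr : 2 ≤ r) :
    (∀ a : Fin r → ℝ, (∑ i, a i) = 0 →
      (IsRegular r a ↔
        ∀ (P : Finset (Fin r)) (l : ℤ), NontrivPart r (by omega) P →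
          a ∉ wallSet r P l)) ∧
    (∀ a b : Fin r → ℝ, (∑ i, a i) = 0 → (∑ i, b i) = 0 →
      IsRegular r a → IsRegular r b →
      ((∀ B, IsOB r B → intPart B a = intPart B b) ↔
        b ∈ connectedComponentIn
          {c : Fin r → ℝ | (∑ i, c i) = 0 ∧
            ∀ (P : Finset (Fin r)) (l : ℤ), NontrivPart r (by omega) P →
              c ∉ wallSet r P l} a)) := by
  have hr0 : 0 < r := by omega
  refine ⟨fun a ha => (isRegular_iff_forall_fract_sum_ne_zero ha).trans
    (offWalls_iff_forall_fract_sum_ne_zero hr0 ha).symm, fun a b ha hb hra hrb => ?_⟩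
  have hmem : ∀ c : Fin r → ℝ, ∑ i, c i = 0 → IsRegular r c →
      c ∈ {c | c ∈ {c | ∑ i, c i = 0} ∧ ∀ S : ProperSubset r, Int.fract (subsetSum S.1 c) ≠ 0} :=
    fun c hc hrc => ⟨hc, fun S => by
      simpa using (isRegular_iff_forall_fract_sum_ne_zero hc).mp hrc S.1 S.2.1 S.2.2⟩
  have hconvex : Convex ℝ {c : Fin r → ℝ | ∑ i, c i = 0} := by
    simpa using convex_hyperplane (subsetSum (r := r) univ).toLinearMap.isLinear 0
  rw [setOf_offWalls_eq hr0, mem_connectedComponentIn_iff_floor_eq hconvex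
    (fun S : ProperSubset r => subsetSum S.1) (hmem a ha hra) (hmem b hb hrb),
    forall_intPart_eq_iff ha hb]
  simp only [subsetSum_apply, Subtype.forall, and_imp]

end Verlinde
end
end

section
/- Let k ≥ 0 be an integer and let Θ : V* → ℝ be a polynomial function such that Θ(σ·(λ+ρ) − ρ) = sign(σ)·Θ(λ) for every σ ∈ Σ_r and every λ ∈ V*, and Θ(λ + (k+r)γ) = Θ(λ) for every γ ∈ Λ and every λ ∈ V*. Then Θ is identically zero. -/
open scoped BigOperators

attribute [local instance] Classical.propDecidable

noncomputable section

namespace Verlinde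


variable {r : ℕ}

/-- Evaluation of a one-parameter specialization of a multivariate polynomial. -/
lemma eval_aeval_line {n : ℕ} (p : MvPolynomial (Fin n) ℝ) (f : Fin n → Polynomial ℝ) (s : ℝ) :
    Polynomial.eval s (MvPolynomial.aeval f p)
      = MvPolynomial.eval (fun i => Polynomial.eval s (f i)) p := by
  have := AlgHom.congr_fun (MvPolynomial.comp_aeval (f := f) (φ := Polynomial.aeval s)) p
  simp only [AlgHom.coe_comp, Function.comp_apply, Polynomial.aeval_def,
    Algebra.algebraMap_self, MvPolynomial.aeval_def, MvPolynomial.eval₂_id] at this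
  simp only [Polynomial.eval, MvPolynomial.aeval_def]
  exact this


/-- A polynomial function on `V*` that is anti-invariant
under the dot action of `Σ_r` and invariant under translation by `(k+r)Λ`
vanishes identically on `V*`. -/
theorem antiinvariant_periodic_polynomial_vanishes
    (r : ℕ) (hr : 2 ≤ r) (k : ℕ)
    (Θ : (Fin r → ℝ) → ℝ)
    (hpoly : ∃ p : MvPolynomial (Fin r) ℝ,
      ∀ a : Fin r → ℝ, (∑ i, a i) = 0 → Θ a = MvPolynomial.eval a p)
    (hanti : ∀ (σ : Equiv.Perm (Fin r)) (lam : Fin r → ℝ), (∑ i, lam i) = 0 →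
      Θ (permVec σ (lam + rho r) - rho r) = ((Equiv.Perm.sign σ : ℤ) : ℝ) * Θ lam)
    (hper : ∀ γ : Fin r → ℤ, (∑ i, γ i) = 0 → ∀ lam : Fin r → ℝ, (∑ i, lam i) = 0 →
      Θ (lam + ((k : ℝ) + r) • fun i => (γ i : ℝ)) = Θ lam) :
    ∀ lam : Fin r → ℝ, (∑ i, lam i) = 0 → Θ lam = 0 := by
  obtain ⟨p, hp⟩ := hpoly
  have hrpos : 0 < r := by omega
  have hkr : (0:ℝ) < (k:ℝ) + r := by
    have h1 : (0:ℝ) < (r:ℝ) := by exact_mod_cast hrpos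
    have h2 : (0:ℝ) ≤ (k:ℝ) := Nat.cast_nonneg k
    linarith
  -- Step 1: translation invariance along real multiples of integer directions
  have htrans : ∀ lam : Fin r → ℝ, (∑ i, lam i) = 0 → ∀ γ : Fin r → ℤ, (∑ i, γ i) = 0 →
      ∀ t : ℝ, Θ (lam + t • fun i => (γ i : ℝ)) = Θ lam := by
    intro lam hlam γ hγ t
    have hγR : (∑ i, (γ i : ℝ)) = 0 := by exact_mod_cast hγ
    have hsum : ∀ s : ℝ, (∑ i, (lam + s • fun i => (γ i : ℝ)) i) = 0 := by
      intro s
      simp only [Pi.add_apply, Pi.smul_apply, smul_eq_mul]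
      rw [Finset.sum_add_distrib, hlam, ← Finset.mul_sum, hγR]
      ring
    set F : Polynomial ℝ :=
      MvPolynomial.aeval (fun i => Polynomial.C (lam i) + Polynomial.C ((γ i : ℝ)) * Polynomial.X) p
      with hF
    have heval : ∀ s : ℝ, Polynomial.eval s F = Θ (lam + s • fun i => (γ i : ℝ)) := by
      intro s
      rw [hp _ (hsum s), hF, eval_aeval_line]
      have harg : (fun i => Polynomial.eval s (Polynomial.C (lam i) + Polynomial.C ((γ i : ℝ)) * Polynomial.X))
          = (lam + s • fun i => (γ i : ℝ)) := by
        funext i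
        simp [mul_comm]
      rw [harg]
    have hvals : ∀ n : ℕ, Polynomial.eval (((n:ℝ)+1) * ((k:ℝ)+r)) F = Θ lam := by
      intro n
      rw [heval]
      have hγ' : (∑ i, (((n:ℤ)+1) * γ i)) = 0 := by
        rw [← Finset.mul_sum, hγ, mul_zero]
      have := hper (fun i => ((n:ℤ)+1) * γ i) hγ' lam hlam
      have harg : (lam + (((n:ℝ)+1) * ((k:ℝ)+r)) • fun i => (γ i : ℝ))
          = lam + ((k:ℝ) + r) • fun i => (((((n:ℤ)+1) * γ i) : ℤ) : ℝ) := by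
        funext i
        simp only [Pi.add_apply, Pi.smul_apply, smul_eq_mul]
        push_cast
        ring
      rw [harg, this]
    have hzero : F - Polynomial.C (Θ lam) = 0 := by
      apply Polynomial.eq_zero_of_infinite_isRoot
      refine Set.infinite_of_injective_forall_mem
        (f := fun n : ℕ => ((n:ℝ)+1) * ((k:ℝ)+r)) ?_ ?_
      · intro a b hab
        simp only at hab
        have : (a:ℝ) + 1 = (b:ℝ) + 1 := mul_right_cancel₀ (ne_of_gt hkr) hab
        exact_mod_cast (by linarith : (a:ℝ) = (b:ℝ))
      · intro n
        simp only [Set.mem_setOf_eq, Polynomial.IsRoot, Polynomial.eval_sub,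
          Polynomial.eval_C, hvals n, sub_self]
    have hFt : Polynomial.eval t F = Θ lam := by
      have := congrArg (Polynomial.eval t) hzero
      simp only [Polynomial.eval_sub, Polynomial.eval_C, Polynomial.eval_zero] at this
      linarith
    rw [← heval t, hFt]
  -- Step 2: Θ is constant on V*
  have hconst : ∀ lam : Fin r → ℝ, (∑ i, lam i) = 0 → Θ lam = Θ 0 := by
    have hd : ∀ d : ℕ, ∀ lam : Fin r → ℝ, (∑ i, lam i) = 0 →
        (∀ i : Fin r, (i : ℕ) < r - 1 - d → lam i = 0) → Θ lam = Θ 0 := by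
      intro d
      induction d with
      | zero =>
        intro lam hlam hz
        have hlast : lam ⟨r-1, by omega⟩ = 0 := by
          have := Finset.sum_eq_single_of_mem (⟨r-1, by omega⟩ : Fin r)
            (Finset.mem_univ _) (f := lam)
            (fun b _ hb => hz b (by
              have hb' : (b : ℕ) ≠ r - 1 := fun h => hb (Fin.ext h)
              have := b.isLt
              omega))
          rw [hlam] at this
          exact this.symm
        have : lam = 0 := by
          funext j
          by_cases hj : (j : ℕ) < r - 1
          · exact hz j (by omega)
          · have hjv : (j : ℕ) = r - 1 := by have := j.isLt; omega
            have hje : j = ⟨r-1, by omega⟩ := Fin.ext (by simp [hjv])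
            rw [hje]; exact hlast
        rw [this]
      | succ d ih =>
        intro lam hlam hz
        by_cases hcase : r - 1 - d = r - 1 - (d+1)
        · exact ih lam hlam (fun i hi => hz i (by omega))
        · set m : ℕ := r - 1 - (d+1) with hm
          have hmlt : m < r - 1 := by omega
          set i₀ : Fin r := ⟨m, by omega⟩ with hi₀
          set last : Fin r := ⟨r-1, by omega⟩ with hlastdef
          have hne : i₀ ≠ last := by
            intro h
            have := congrArg Fin.val h
            simp only [hi₀, hlastdef] at this
            omega
          set γ : Fin r → ℤ := fun t => (if t = i₀ then 1 else 0) - (if t = last then 1 else 0)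
            with hγdef
          have hγsum : (∑ i, γ i) = 0 := by
            simp [hγdef, Finset.sum_sub_distrib]
          set lam' : Fin r → ℝ := lam + (-(lam i₀)) • fun i => (γ i : ℝ) with hlam'
          have hval : ∀ j, lam' j
              = lam j + (-(lam i₀)) * ((if j = i₀ then (1:ℝ) else 0) - (if j = last then 1 else 0)) := by
            intro j
            simp only [hlam', Pi.add_apply, Pi.smul_apply, smul_eq_mul, hγdef]
            push_cast
            ring
          have hsum' : (∑ i, lam' i) = 0 := by
            have hγR : (∑ i, (γ i : ℝ)) = 0 := by exact_mod_cast hγsum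
            simp only [hlam', Pi.add_apply, Pi.smul_apply, smul_eq_mul]
            rw [Finset.sum_add_distrib, hlam, ← Finset.mul_sum, hγR]
            ring
          have hz' : ∀ i : Fin r, (i : ℕ) < r - 1 - d → lam' i = 0 := by
            intro j hj
            rw [hval j]
            by_cases hji : j = i₀
            · have hjl : j ≠ last := hji ▸ hne
              simp [hji, if_neg hne]
            · have hjm : (j : ℕ) < m := by
                have : (j : ℕ) ≠ m := fun h => hji (Fin.ext h)
                omega
              have hjl : j ≠ last := by
                intro h
                have := congrArg Fin.val h
                simp only [hlastdef] at this
                omega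
              rw [if_neg hji, if_neg hjl]
              have := hz j (by omega)
              simp [this]
          have := htrans lam hlam γ hγsum (-(lam i₀))
          rw [← hlam'] at this
          rw [← this]
          exact ih lam' hsum' hz'
    intro lam hlam
    exact hd (r-1) lam hlam (fun i hi => absurd hi (by omega))
  -- Step 3: anti-invariance forces the constant to vanish
  intro lam hlam
  have hρ : (∑ i, rho r i) = 0 := by
    simp only [rho]
    rw [Finset.sum_sub_distrib, Finset.sum_const, Finset.card_univ, Fintype.card_fin]
    have hgauss : (∑ i : Fin r, (i : ℝ)) = (r : ℝ) * ((r : ℝ) - 1) / 2 := by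
      have h2 : ((∑ i ∈ Finset.range r, i) : ℕ) * 2 = r * (r - 1) := Finset.sum_range_id_mul_two r
      have h3 : ((∑ i ∈ Finset.range r, (i:ℝ))) * 2 = (r:ℝ) * ((r:ℝ) - 1) := by
        have := congrArg (fun n : ℕ => (n : ℝ)) h2
        push_cast [Nat.cast_sub (by omega : 1 ≤ r)] at this
        linarith [this]
      rw [Fin.sum_univ_eq_sum_range (fun i => (i : ℝ)) r]
      linarith
    rw [hgauss]
    ring
  have h01 : (⟨0, by omega⟩ : Fin r) ≠ ⟨1, by omega⟩ := by
    intro h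
    have := congrArg Fin.val h
    simp at this
  set σ : Equiv.Perm (Fin r) := Equiv.swap ⟨0, by omega⟩ ⟨1, by omega⟩ with hσ
  have hsign : Equiv.Perm.sign σ = -1 := Equiv.Perm.sign_swap h01
  have h1 := hanti σ lam hlam
  have hsumarg : (∑ i, (permVec σ (lam + rho r) - rho r) i) = 0 := by
    simp only [Pi.sub_apply, permVec]
    rw [Finset.sum_sub_distrib, hρ, Equiv.sum_comp σ⁻¹ (lam + rho r)]
    simp only [Pi.add_apply]
    rw [Finset.sum_add_distrib, hlam, hρ]
    ring
  rw [hconst _ hsumarg, hconst lam hlam, hsign] at h1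
  have : Θ 0 = 0 := by
    push_cast at h1
    linarith
  rw [hconst lam hlam, this]


end Verlinde
end
end

section
/- Let k be a positive integer and let P ∈ ℝ[X,Y] be a polynomial such that for all real λ, μ: P(λ,μ) = −P(λ,−μ−1), P(λ,μ) = −P(−λ+k+1,μ), P(λ,μ) = −P(−λ−1,μ), and P(λ,μ) = −P(λ,−μ+k+1). Then P is the zero polynomial. -/
open scoped BigOperators

noncomputable section

namespace Verlinde

/-- Evaluating the one-variable specialization agrees with `MvPolynomial.eval`. -/
lemma eval_aeval_fst (P : MvPolynomial (Fin 2) ℝ) (μ x : ℝ) :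
    Polynomial.eval x (MvPolynomial.aeval ![Polynomial.X, Polynomial.C μ] P)
      = MvPolynomial.eval ![x, μ] P := by
  rw [MvPolynomial.aeval_def, MvPolynomial.polynomial_eval_eval₂]
  have h1 : (Polynomial.evalRingHom x).comp (algebraMap ℝ (Polynomial ℝ)) = RingHom.id ℝ := by
    ext r; simp
  have h2 : (fun s => Polynomial.eval x (![Polynomial.X, Polynomial.C μ] s)) = ![x, μ] := by
    funext s; fin_cases s <;> simp
  rw [h1, h2]
  rfl

/-- A real polynomial whose evaluation is periodic with positive period is constant. -/
lemma periodic_poly_eval_const (Q : Polynomial ℝ) (T : ℝ) (hT : 0 < T)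
    (hper : ∀ x : ℝ, Q.eval (x + T) = Q.eval x) :
    ∀ x : ℝ, Q.eval x = Q.eval 0 := by
  have hroots : ∀ n : ℕ, (Q - Polynomial.C (Q.eval 0)).IsRoot ((n : ℝ) * T) := by
    intro n
    have : Q.eval ((n : ℝ) * T) = Q.eval 0 := by
      induction n with
      | zero => simp
      | succ m ih =>
        have : ((m + 1 : ℕ) : ℝ) * T = (m : ℝ) * T + T := by push_cast; ring
        rw [this, hper, ih]
    simp [Polynomial.IsRoot, this]
  have hzero : Q - Polynomial.C (Q.eval 0) = 0 := by
    apply Polynomial.eq_zero_of_infinite_isRoot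
    apply Set.infinite_of_injective_forall_mem (f := fun n : ℕ => (n : ℝ) * T)
    · intro a b hab
      have : (a : ℝ) = b := mul_right_cancel₀ (ne_of_gt hT) hab
      exact_mod_cast this
    · exact hroots
  intro x
  have := sub_eq_zero.mp hzero
  rw [this]; simp

/-- A two-variable real polynomial satisfying the four
affine-Weyl antisymmetries is identically zero. -/
theorem antisymmetric_two_variable_polynomial_vanishes
    (k : ℕ) (hk : 1 ≤ k) (P : MvPolynomial (Fin 2) ℝ)
    (h1 : ∀ lam mu : ℝ,
      MvPolynomial.eval ![lam, mu] P = -MvPolynomial.eval ![lam, -mu - 1] P)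
    (h2 : ∀ lam mu : ℝ,
      MvPolynomial.eval ![lam, mu] P = -MvPolynomial.eval ![-lam + k + 1, mu] P)
    (h3 : ∀ lam mu : ℝ,
      MvPolynomial.eval ![lam, mu] P = -MvPolynomial.eval ![-lam - 1, mu] P)
    (h4 : ∀ lam mu : ℝ,
      MvPolynomial.eval ![lam, mu] P = -MvPolynomial.eval ![lam, -mu + k + 1] P) :
    P = 0 := by
  -- Periodicity in the first variable with period k + 2.
  have hper : ∀ x μ : ℝ, MvPolynomial.eval ![x + (k + 2 : ℝ), μ] P
      = MvPolynomial.eval ![x, μ] P := by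
    intro x μ
    have e2 := h2 (-(x + 1)) μ
    have e3 := h3 x μ
    have : -(-(x + 1)) + (k : ℝ) + 1 = x + (k + 2) := by ring
    rw [this] at e2
    have : -x - 1 = -(x + 1) := by ring
    rw [this] at e3
    -- e3 : P(x, μ) = -P(-(x+1), μ), e2 : P(-(x+1), μ) = -P(x + (k+2), μ)
    rw [e3, e2, neg_neg]
  -- Hence for each μ, the specialization in the first variable is constant.
  have hconst : ∀ x μ : ℝ, MvPolynomial.eval ![x, μ] P = MvPolynomial.eval ![0, μ] P := by
    intro x μ
    have hT : (0 : ℝ) < (k : ℝ) + 2 := by positivity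
    have := periodic_poly_eval_const
      (MvPolynomial.aeval ![Polynomial.X, Polynomial.C μ] P) ((k : ℝ) + 2) hT
      (fun y => by rw [eval_aeval_fst, eval_aeval_fst, hper]) x
    rwa [eval_aeval_fst, eval_aeval_fst] at this
  -- Antisymmetry then forces each value to vanish.
  have hzero : ∀ x μ : ℝ, MvPolynomial.eval ![x, μ] P = 0 := by
    intro x μ
    have e3 := h3 x μ
    rw [hconst x μ, hconst (-x - 1) μ] at e3
    rw [hconst x μ]
    linarith
  -- A polynomial over an infinite field vanishing everywhere is zero.
  apply MvPolynomial.funext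
  intro x
  have hx : x = ![x 0, x 1] := by
    funext i; fin_cases i <;> rfl
  rw [hx, hzero]
  simp
end Verlinde
end
end
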